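/- arXiv:1902.03635 — 2 statements merged into one kernel-verified Lean document; each statement's English description precedes it below -/
import Mathlib

section
/- Let F₁ : ℝ^p → ℝ ∪ {∞} be proper closed, U ∈ ℝ^{p×q} a matrix with full row rank (so that the linear map x ↦ Ux is surjective), and define F(x) = F₁(Ux). If F₁ satisfies the KL property at Ux̄ with exponent α ∈ [0,1), then F satisfies the KL property at x̄ with exponent α. -/
/-! A continuous right inverse `g` of the surjection `T` transports subgradients: testing `f ∘ T`
along the points `x + g (y - T x)`, which `T` maps to `y`, shows that `g* ζ` is a Fréchet
subgradient of `f` at `T x` whenever `ζ` is one of `f ∘ T` at `x`, and this passes to limiting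
subgradients. Since `‖g* ζ‖ ≤ ‖g*‖ ‖ζ‖`, the KL inequality for `f` at `T x̄` gives the one for
`f ∘ T` at `x̄`, with the constant divided by `‖g*‖ + 1`. -/

open Filter Topology

variable {E : Type*} [NormedAddCommGroup E] [InnerProductSpace ℝ E] [FiniteDimensional ℝ E]

/-- `ζ` is a regular (Fréchet) subgradient of `f` at `x`. -/
def HasRegSubgradAt (f : E → EReal) (x ζ : E) : Prop :=
  ∃ r : ℝ, f x = (r : EReal) ∧ ∀ ε : ℝ, 0 < ε →
    ∀ᶠ z in 𝓝[≠] x, ((r + inner ℝ ζ (z - x) - ε * ‖z - x‖ : ℝ) : EReal) ≤ f z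

/-- The limiting (Mordukhovich) subdifferential of `f` at `x`. -/
def limSubdiff (f : E → EReal) (x : E) : Set E :=
  {ζ | ∃ (xk : ℕ → E) (ζk : ℕ → E),
    Tendsto xk atTop (𝓝 x) ∧ Tendsto (fun k => f (xk k)) atTop (𝓝 (f x)) ∧
    Tendsto ζk atTop (𝓝 ζ) ∧ ∀ k, HasRegSubgradAt f (xk k) (ζk k)}

/-- `h` satisfies the KL property at `x0` with exponent `α`:
`dist(0, ∂h(x)) ≥ c (h(x) - h(x0))^α` near `x0` in the relevant range. -/
def KLExpAt (h : E → EReal) (x0 : E) (α : ℝ) : Prop :=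
  ∃ c > (0 : ℝ), ∃ a > (0 : ℝ), ∃ ε > (0 : ℝ), ∀ x : E, ‖x - x0‖ < ε →
    h x0 < h x → h x < h x0 + (a : EReal) →
    ENNReal.ofReal (c * ((h x - h x0).toReal) ^ α) ≤ EMetric.infEdist 0 (limSubdiff h x)

variable {F : Type*} [NormedAddCommGroup F] [InnerProductSpace ℝ F] [FiniteDimensional ℝ F]
  {f : F → EReal} {T : E →L[ℝ] F} {g : F →L[ℝ] E}

open ContinuousLinearMap

theorem HasRegSubgradAt.of_comp (hg : T.comp g = .id ℝ F) {x ζ : E}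
    (h : HasRegSubgradAt (fun z => f (T z)) x ζ) : HasRegSubgradAt f (T x) (adjoint g ζ) := by
  obtain ⟨r, hr, hev⟩ := h
  refine ⟨r, hr, fun ε hε => ?_⟩
  set φ : F → E := fun y => x + g (y - T x)
  have hTg (y : F) : T (g y) = y := congr($hg y)
  have hTφ (y : F) : T (φ y) = y := by simp only [φ, map_add, hTg, add_sub_cancel]
  have hφ : Tendsto φ (𝓝[≠] (T x)) (𝓝[≠] x) := by
    refine tendsto_nhdsWithin_of_tendsto_nhds_of_eventually_within _ ?_ ?_
    · have hcont : Continuous φ := by fun_prop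
      simpa [φ] using (hcont.tendsto (T x)).mono_left nhdsWithin_le_nhds
    · filter_upwards [self_mem_nhdsWithin] with y (hy : y ≠ T x) (hφy : φ y = x)
      exact hy (by rw [← hTφ y, hφy])
  set δ := ε / (‖g‖ + 1)
  filter_upwards [hφ.eventually (hev δ (by positivity))] with y hy
  rw [hTφ, show φ y - x = g (y - T x) from add_sub_cancel_left _ _, ← adjoint_inner_left] at hy
  refine le_trans (EReal.coe_le_coe_iff.2 ?_) hy
  have hδ : δ * ‖g (y - T x)‖ ≤ ε * ‖y - T x‖ :=
    calc δ * ‖g (y - T x)‖ ≤ δ * ((‖g‖ + 1) * ‖y - T x‖) := by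
          gcongr
          exact (g.le_opNorm _).trans (by gcongr; linarith)
      _ = ε * ‖y - T x‖ := by rw [← mul_assoc, div_mul_cancel₀ _ (by positivity)]
  linarith

theorem mapsTo_adjoint_limSubdiff_comp (hg : T.comp g = .id ℝ F) (x : E) :
    Set.MapsTo (adjoint g) (limSubdiff (fun z => f (T z)) x) (limSubdiff f (T x)) := by
  rintro ζ ⟨xk, ζk, hxk, hfxk, hζk, hreg⟩
  exact ⟨fun k => T (xk k), fun k => adjoint g (ζk k), (T.continuous.tendsto x).comp hxk, hfxk,
    ((adjoint g).continuous.tendsto ζ).comp hζk, fun k => (hreg k).of_comp hg⟩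

theorem ofReal_div_le_infEDist_limSubdiff_comp (hg : T.comp g = .id ℝ F) {x : E} {r : ℝ}
    (h : ENNReal.ofReal r ≤ Metric.infEDist 0 (limSubdiff f (T x))) :
    ENNReal.ofReal (r / (‖adjoint g‖ + 1)) ≤
      Metric.infEDist 0 (limSubdiff (fun z => f (T z)) x) := by
  refine Metric.le_infEDist.2 fun ζ hζ => ?_
  have hr : ENNReal.ofReal r ≤ ENNReal.ofReal ‖adjoint g ζ‖ := by
    simpa only [edist_zero_left, ← enorm_eq_nnnorm, ← ofReal_norm] using
      h.trans (Metric.infEDist_le_edist_of_mem (mapsTo_adjoint_limSubdiff_comp hg x hζ))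
  rw [edist_zero_left, ← enorm_eq_nnnorm, ← ofReal_norm]
  refine ENNReal.ofReal_le_ofReal ((div_le_iff₀ (by positivity)).2 ?_)
  calc r ≤ ‖adjoint g ζ‖ := (ENNReal.ofReal_le_ofReal_iff (norm_nonneg _)).1 hr
    _ ≤ ‖adjoint g‖ * ‖ζ‖ := (adjoint g).le_opNorm ζ
    _ ≤ ‖ζ‖ * (‖adjoint g‖ + 1) := by nlinarith [norm_nonneg ζ]

theorem KLExpAt.comp_surjective (hT : Function.Surjective T) {x₀ : E} {α : ℝ}
    (h : KLExpAt f (T x₀) α) : KLExpAt (fun x => f (T x)) x₀ α := by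
  obtain ⟨g, hg⟩ := T.exists_rightInverse_of_surjective (LinearMap.range_eq_top.2 hT)
  obtain ⟨c, hc, a, ha, ε, hε, hKL⟩ := h
  refine ⟨c / (‖adjoint g‖ + 1), by positivity, a, ha, ε / (‖T‖ + 1), by positivity,
    fun x hx hlt hlt' => ?_⟩
  have hTx : ‖T x - T x₀‖ < ε :=
    calc ‖T x - T x₀‖ ≤ ‖T‖ * ‖x - x₀‖ := by rw [← map_sub]; exact T.le_opNorm _
      _ ≤ (‖T‖ + 1) * ‖x - x₀‖ := by gcongr; linarith
      _ < ε := (lt_div_iff₀' (by positivity)).1 hx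
  rw [div_mul_eq_mul_div]
  exact ofReal_div_le_infEDist_limSubdiff_comp hg (hKL (T x) hTx hlt hlt')

theorem stmt7_general (p q : ℕ) (F₁ : EuclideanSpace ℝ (Fin p) → EReal)
    (U : Matrix (Fin p) (Fin q) ℝ)
    (hU : Function.Surjective U.mulVec)
    (xb : EuclideanSpace ℝ (Fin q)) (α : ℝ)
    (hKL : KLExpAt F₁
      ((EuclideanSpace.equiv (Fin p) ℝ).symm (U.mulVec (EuclideanSpace.equiv (Fin q) ℝ xb))) α) :
    KLExpAt
      (fun x : EuclideanSpace ℝ (Fin q) =>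
        F₁ ((EuclideanSpace.equiv (Fin p) ℝ).symm (U.mulVec (EuclideanSpace.equiv (Fin q) ℝ x))))
      xb α := by
  have hT : Function.Surjective (Matrix.toEuclideanLin U).toContinuousLinearMap := fun y =>
    let ⟨x, hx⟩ := hU y.ofLp
    ⟨WithLp.toLp 2 x, congrArg (WithLp.toLp 2) hx⟩
  exact KLExpAt.comp_surjective hT hKL

/-- KL exponent is preserved under composition with a surjective linear map
`x ↦ U x` given by a full-row-rank matrix `U`. -/
theorem stmt7 (p q : ℕ) (F₁ : EuclideanSpace ℝ (Fin p) → EReal)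
    (hproper : (∃ z, F₁ z ≠ ⊤) ∧ ∀ z, F₁ z ≠ ⊥)
    (hlsc : LowerSemicontinuous F₁)
    (U : Matrix (Fin p) (Fin q) ℝ)
    (hU : Function.Surjective U.mulVec)
    (xb : EuclideanSpace ℝ (Fin q)) (α : ℝ) (hα : 0 ≤ α ∧ α < 1)
    (hKL : KLExpAt F₁
      ((EuclideanSpace.equiv (Fin p) ℝ).symm (U.mulVec (EuclideanSpace.equiv (Fin q) ℝ xb))) α) :
    KLExpAt
      (fun x : EuclideanSpace ℝ (Fin q) =>
        F₁ ((EuclideanSpace.equiv (Fin p) ℝ).symm (U.mulVec (EuclideanSpace.equiv (Fin q) ℝ x))))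
      xb α :=
  stmt7_general p q F₁ U hU xb α hKL
end

section
/- Let h : X → ℝ ∪ {∞} be a proper closed function and Ω ⊆ dom ∂h a nonempty compact set on which h is constant, say h ≡ h̄ on Ω. Suppose h satisfies the KL property with exponent α ∈ [0,1) at each point of Ω. Then there exist ε > 0, a > 0 and c > 0 such that dist(0, ∂h(x)) ≥ c (h(x) − h̄)^α for every x with dist(x, Ω) < ε and h̄ < h(x) < h̄ + a. (Uniformized KL property with exponent.) -/
/-!
Shrinking the constants `c` and `a` only weakens the KL inequality, so at each point of `Ω` the
inequality holds on a fixed ball for all small enough positive `(c, a)`. Finitely many of these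
balls cover `Ω`, hence some `(c, a)` works on all of them at once, and by compactness a uniform
thickening of `Ω` lies inside their union.
-/

open Filter Topology

variable {E : Type*} [NormedAddCommGroup E] [InnerProductSpace ℝ E] [FiniteDimensional ℝ E]

theorem IsCompact.exists_pos_eventually_forall_mem_thickening {X ι : Type*}
    [PseudoMetricSpace X] {s : Set X} (hs : IsCompact s) {l : Filter ι} {P : ι → X → Prop}
    (hloc : ∀ y ∈ s, ∃ ε > 0, ∀ᶠ p in l, ∀ x ∈ Metric.ball y ε, P p x) :
    ∃ δ > 0, ∀ᶠ p in l, ∀ x ∈ Metric.thickening δ s, P p x := by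
  choose ε hε hP using hloc
  let U : s → Set X := fun y => Metric.ball y (ε y y.2)
  obtain ⟨t, hst⟩ := hs.elim_finite_subcover U (fun _ => Metric.isOpen_ball)
    fun y hy => Set.mem_iUnion.2 ⟨⟨y, hy⟩, Metric.mem_ball_self (hε y hy)⟩
  obtain ⟨δ, hδ, hδt⟩ := hs.exists_thickening_subset_open
    (isOpen_biUnion fun _ _ => Metric.isOpen_ball) hst
  refine ⟨δ, hδ, ((eventually_all_finset t).2 fun y _ => hP y y.2).mono fun p hp x hx => ?_⟩
  obtain ⟨y, hyt, hxy⟩ := Set.mem_iUnion₂.1 (hδt hx)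
  exact hp y hyt x hxy

section KLIneq

variable {F : Type*} [NormedAddCommGroup F] [InnerProductSpace ℝ F]

def KLIneqAt (h : F → EReal) (hbar α c a : ℝ) (x : F) : Prop :=
  (hbar : EReal) < h x → h x < (hbar : EReal) + (a : EReal) →
    ENNReal.ofReal (c * ((h x - (hbar : EReal)).toReal) ^ α) ≤
      EMetric.infEdist 0 (limSubdiff h x)

theorem KLIneqAt.mono {h : F → EReal} {hbar α c a c' a' : ℝ} {x : F}
    (hx : KLIneqAt h hbar α c a x) (hc : c' ≤ c) (ha : a' ≤ a) : KLIneqAt h hbar α c' a' x := by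
  intro hlo hhi
  have hgap : 0 ≤ ((h x - (hbar : EReal)).toReal) ^ α :=
    Real.rpow_nonneg (EReal.toReal_nonneg (EReal.sub_pos.2 hlo).le) α
  refine le_trans (ENNReal.ofReal_le_ofReal (mul_le_mul_of_nonneg_right hc hgap)) (hx hlo ?_)
  exact hhi.trans_le (add_le_add_right (EReal.coe_le_coe_iff.2 ha) _)

theorem KLExpAt.eventually_klIneqAt {h : F → EReal} {y : F} {hbar α : ℝ}
    (hKL : KLExpAt h y α) (hy : h y = hbar) :
    ∃ ε > 0, ∀ᶠ p in 𝓝[>] (0 : ℝ) ×ˢ 𝓝[>] (0 : ℝ),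
      ∀ x ∈ Metric.ball y ε, KLIneqAt h hbar α p.1 p.2 x := by
  obtain ⟨c, hc, a, ha, ε, hε, H⟩ := hKL
  refine ⟨ε, hε, ?_⟩
  filter_upwards [(eventually_le_nhds hc).filter_mono nhdsWithin_le_nhds |>.prod_mk
    ((eventually_le_nhds ha).filter_mono nhdsWithin_le_nhds)] with p hp x hx
  have hxy : KLIneqAt h hbar α c a x := by
    rw [mem_ball_iff_norm] at hx
    simpa only [KLIneqAt, hy] using H x hx
  exact hxy.mono hp.1 hp.2

end KLIneq

theorem stmt19_general (h : E → EReal)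
    (Ω : Set E) (hΩne : Ω.Nonempty) (hΩcpt : IsCompact Ω)
    (hbar : ℝ) (hconst : ∀ x ∈ Ω, h x = (hbar : EReal))
    (α : ℝ)
    (hKL : ∀ x ∈ Ω, KLExpAt h x α) :
    ∃ ε > (0 : ℝ), ∃ a > (0 : ℝ), ∃ c > (0 : ℝ), ∀ x : E,
      Metric.infDist x Ω < ε → (hbar : EReal) < h x → h x < (hbar : EReal) + (a : EReal) →
      ENNReal.ofReal (c * ((h x - (hbar : EReal)).toReal) ^ α) ≤
        EMetric.infEdist 0 (limSubdiff h x) := by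
  obtain ⟨δ, hδ, hunif⟩ := hΩcpt.exists_pos_eventually_forall_mem_thickening
    fun y hy => (hKL y hy).eventually_klIneqAt (hconst y hy)
  obtain ⟨⟨c, a⟩, ⟨hc, ha⟩, hca⟩ :=
    ((eventually_mem_nhdsWithin.prod_mk eventually_mem_nhdsWithin).and hunif).exists
  exact ⟨δ, hδ, a, ha, c, hc, fun x hx =>
    hca x ((Metric.mem_thickening_iff_infDist_lt hΩne).2 hx)⟩

/-- uniformized KL property with exponent over a compact set on which `h`
is constant. -/
theorem stmt19 (h : E → EReal)
    (hproper : (∃ z, h z ≠ ⊤) ∧ ∀ z, h z ≠ ⊥)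
    (hlsc : LowerSemicontinuous h)
    (Ω : Set E) (hΩne : Ω.Nonempty) (hΩcpt : IsCompact Ω)
    (hΩdom : ∀ x ∈ Ω, (limSubdiff h x).Nonempty)
    (hbar : ℝ) (hconst : ∀ x ∈ Ω, h x = (hbar : EReal))
    (α : ℝ) (hα : 0 ≤ α ∧ α < 1)
    (hKL : ∀ x ∈ Ω, KLExpAt h x α) :
    ∃ ε > (0 : ℝ), ∃ a > (0 : ℝ), ∃ c > (0 : ℝ), ∀ x : E,
      Metric.infDist x Ω < ε → (hbar : EReal) < h x → h x < (hbar : EReal) + (a : EReal) →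
      ENNReal.ofReal (c * ((h x - (hbar : EReal)).toReal) ^ α) ≤
        EMetric.infEdist 0 (limSubdiff h x) :=
  stmt19_general h Ω hΩne hΩcpt hbar hconst α hKL
end
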